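/- arXiv:2107.01917 — 6 statements merged into one kernel-verified Lean document; each statement's English description precedes it below -/
import Mathlib

section
/- Let V be a finite set of variables containing distinct variables s₀, …, s_d, let s be the Boolean function s₀ ⊕ ⋯ ⊕ s_d, and let δ be a Boolean function on V. If there exists an index i such that δ does not functionally depend on s_i, then δ and s are statistically independent. -/
namespace Danira

instance : Std.Commutative xor := ⟨Bool.xor_comm⟩
instance : Std.Associative xor := ⟨Bool.xor_assoc⟩
instance : Std.Commutative or := ⟨Bool.or_comm⟩
instance : Std.Associative or := ⟨Bool.or_assoc⟩

variable {V : Type*} [Fintype V] [DecidableEq V]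

/-- Number of satisfying assignments of a Boolean function. -/
def weight (f : (V → Bool) → Bool) : ℕ :=
  (Finset.univ.filter fun α : V → Bool => f α = true).card

/-- A Boolean function is balanced if exactly half of all assignments satisfy it. -/
def Balanced (f : (V → Bool) → Bool) : Prop :=
  weight f = 2 ^ (Fintype.card V - 1)

/-- Statistical independence of two Boolean functions. -/
def StatIndep (f g : (V → Bool) → Bool) : Prop :=
  weight (fun α => f α && g α) * weight (fun α => !f α)
    = weight (fun α => !f α && g α) * weight f

/-- `f` functionally depends on variable `x`. -/
def FunDep (f : (V → Bool) → Bool) (x : V) : Prop :=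
  ∃ α β : V → Bool, (∀ v, v ≠ x → α v = β v) ∧ f α ≠ f β

instance (f : (V → Bool) → Bool) (x : V) : Decidable (FunDep f x) := by
  unfold FunDep; infer_instance

/-- Partial evaluation `f[b/x]`. -/
def subst (f : (V → Bool) → Bool) (x : V) (b : Bool) : (V → Bool) → Bool :=
  fun α => f (Function.update α x b)

/-- Variables that can be linearly factored out of `f`. -/
def Fact (f : (V → Bool) → Bool) : Finset V :=
  Finset.univ.filter fun x => ∀ α, xor (subst f x false α) (subst f x true α) = true

/-- Essential variables of `f`. -/
def Ess (f : (V → Bool) → Bool) : Finset V :=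
  Finset.univ.filter fun x => FunDep f x


/-- Flipping one variable. -/
def flip' (x : V) (α : V → Bool) : V → Bool := Function.update α x (!α x)

lemma flip'_invol (x : V) (α : V → Bool) : flip' x (flip' x α) = α := by
  unfold flip'
  simp [Function.update_idem]

lemma card_comp_flip (x : V) (p : (V → Bool) → Bool) :
    (Finset.univ.filter fun α : V → Bool => p (flip' x α) = true).card
      = (Finset.univ.filter fun α : V → Bool => p α = true).card := by
  apply Finset.card_bij' (fun α _ => flip' x α) (fun α _ => flip' x α)
  · intro a ha
    simp only [Finset.mem_filter, Finset.mem_univ, true_and] at ha ⊢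
    exact ha
  · intro a ha
    simp only [Finset.mem_filter, Finset.mem_univ, true_and] at ha ⊢
    rw [flip'_invol]; exact ha
  · intro a _; exact flip'_invol x a
  · intro a _; exact flip'_invol x a

lemma fold_flip (d : ℕ) (s : Fin (d + 1) → V) (hs : Function.Injective s)
    (i : Fin (d + 1)) (α : V → Bool) (t : Finset (Fin (d + 1))) :
    t.fold xor false (fun j => flip' (s i) α (s j))
      = xor (decide (i ∈ t)) (t.fold xor false fun j => α (s j)) := by
  induction t using Finset.induction with
  | empty => simp
  | @insert a t ha ih =>
    rw [Finset.fold_insert ha, Finset.fold_insert ha, ih]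
    by_cases hai : a = i
    · subst hai
      have h1 : flip' (s a) α (s a) = !α (s a) := by
        simp [flip', Function.update_self]
      rw [h1, decide_eq_true (Finset.mem_insert_self _ _), decide_eq_false ha]
      cases α (s a) <;> cases t.fold xor false fun j => α (s j) <;> simp
    · have hne : s a ≠ s i := fun hh => hai (hs hh)
      have h1 : flip' (s i) α (s a) = α (s a) := by
        simp [flip', Function.update_of_ne hne]
      rw [h1]
      have h2 : (i ∈ insert a t) = (i ∈ t) := by
        simp only [Finset.mem_insert, eq_iff_iff]
        constructor
        · rintro (hh | hh)
          · exact absurd hh.symm hai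
          · exact hh
        · exact Or.inr
      simp only [h2]
      cases α (s a) <;> cases (decide (i ∈ t)) <;>
        cases t.fold xor false fun j => α (s j) <;> simp

lemma weight_split (f g : (V → Bool) → Bool) :
    weight f = weight (fun α => f α && g α) + weight (fun α => f α && !g α) := by
  unfold weight
  have h1 : (Finset.univ.filter fun α : V → Bool => (f α && g α) = true)
      = (Finset.univ.filter fun α : V → Bool => f α = true).filter
          (fun α => g α = true) := by
    rw [Finset.filter_filter]
    apply Finset.filter_congr
    intro α _
    simp [Bool.and_eq_true]
  have h2 : (Finset.univ.filter fun α : V → Bool => (f α && !g α) = true)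
      = (Finset.univ.filter fun α : V → Bool => f α = true).filter
          (fun α => ¬ (g α = true)) := by
    rw [Finset.filter_filter]
    apply Finset.filter_congr
    intro α _
    cases f α <;> cases g α <;> simp
  rw [h1, h2]
  exact (Finset.card_filter_add_card_filter_not (fun α => g α = true)).symm

theorem stmt2 (d : ℕ) (s : Fin (d + 1) → V) (hs : Function.Injective s)
    (δ : (V → Bool) → Bool)
    (h : ∃ i, ¬ FunDep δ (s i)) :
    StatIndep δ (fun α => Finset.univ.fold xor false (fun i => α (s i))) := by
  obtain ⟨i, hi⟩ := h
  set g : (V → Bool) → Bool := fun α => Finset.univ.fold xor false (fun j => α (s j)) with hg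
  -- δ is invariant under flipping s i
  have hδ : ∀ α, δ (flip' (s i) α) = δ α := by
    intro α
    by_contra hc
    exact hi ⟨flip' (s i) α, α, fun v hv => by
      simp [flip', Function.update_of_ne hv], hc⟩
  -- g flips under flipping s i
  have hgflip : ∀ α, g (flip' (s i) α) = !g α := by
    intro α
    rw [hg]
    simp only
    rw [fold_flip d s hs i α Finset.univ]
    simp
  have key : ∀ p : (V → Bool) → Bool, (∀ α, p (flip' (s i) α) = p α) →
      weight (fun α => p α && g α) = weight (fun α => p α && !g α) := by
    intro p hp
    unfold weight
    rw [← card_comp_flip (s i) (fun α => p α && g α)]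
    congr 1
    apply Finset.filter_congr
    intro α _
    rw [hp α, hgflip α]
  have hA := key δ hδ
  have hC := key (fun α => !δ α) (fun α => by simp only [hδ α])
  have hδs := weight_split δ g
  have hnδs := weight_split (fun α => !δ α) g
  unfold StatIndep
  rw [hδs, hnδs, ← hA, ← hC]
  ring

end Danira
end

section
/- Let V be a finite variable set, x ∈ V, and let δ, f, s be Boolean functions on V such that δ = x ⊕ f where neither f nor s functionally depends on x. Then δ and s are statistically independent. -/
namespace Danira

variable {V : Type*} [Fintype V] [DecidableEq V]

theorem stmt3 (x : V) (δ f s : (V → Bool) → Bool)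
    (hδ : δ = fun α => xor (α x) (f α))
    (hf : ¬ FunDep f x) (hs : ¬ FunDep s x) :
    StatIndep δ s := by
  subst hδ
  have hf' : ∀ (α : V → Bool) b, f (Function.update α x b) = f α := by
    intro α b
    by_contra h
    exact hf ⟨Function.update α x b, α, fun v hv => Function.update_of_ne hv _ _, h⟩
  have hs' : ∀ (α : V → Bool) b, s (Function.update α x b) = s α := by
    intro α b
    by_contra h
    exact hs ⟨Function.update α x b, α, fun v hv => Function.update_of_ne hv _ _, h⟩
  have key : ∀ (g : (V → Bool) → Bool), (∀ (α : V → Bool) b, g (Function.update α x b) = g α) →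
      weight (fun α => (xor (α x) (f α)) && g α)
        = weight (fun α => !(xor (α x) (f α)) && g α) := by
    intro g hg
    unfold weight
    refine Finset.card_bij' (fun α _ => Function.update α x (!α x))
      (fun α _ => Function.update α x (!α x)) ?_ ?_ ?_ ?_
    · intro α hα
      simp only [Finset.mem_filter, Finset.mem_univ, true_and] at hα ⊢
      simp [hf', hg, Function.update_self] at hα ⊢
      obtain ⟨h1, h2⟩ := hα
      exact ⟨by simp [h1], h2⟩
    · intro α hα
      simp only [Finset.mem_filter, Finset.mem_univ, true_and] at hα ⊢
      simp [hf', hg, Function.update_self] at hα ⊢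
      obtain ⟨h1, h2⟩ := hα
      exact ⟨by simp [h1], h2⟩
    · intro α _
      simp [Function.update_idem, Function.update_self, Function.update_eq_self]
    · intro α _
      simp [Function.update_idem, Function.update_self, Function.update_eq_self]
  have h1 := key s hs'
  have h2 := key (fun _ => true) (fun _ _ => rfl)
  simp only [Bool.and_true] at h2
  unfold StatIndep
  rw [h1, h2]

end Danira
end

section
/- Let φ₁, …, φ_n and g be Boolean functions on assignments over a finite variable set V, and let f = φ₁ ∨ ⋯ ∨ φ_n be their pointwise disjunction. If for every subset Ψ ⊆ {1, …, n} the XOR ⊕_{i ∈ Ψ} φ_i (the empty XOR being the constant false) is statistically independent of g, then f is statistically independent of g. -/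
/-!
Pointwise, `2 ^ n * [φ₁ ∨ ⋯ ∨ φₙ] = 2 * ∑_Ψ [⊕_{i ∈ Ψ} φᵢ]`: if some `φᵢ` is true, exactly half
of the subsets `Ψ` contain an odd number of true `φᵢ`, and otherwise both sides vanish.
Independence of `f` from `g`, rewritten as `2 ^ |V| * N(f ∧ g) = N(g) * N(f)`, is linear in the
indicator of `f`, so it passes from the XORs to the disjunction.
-/

namespace Danira

variable {V : Type*} [Fintype V] [DecidableEq V]

theorem weight_add_weight_not (f : (V → Bool) → Bool) :
    weight f + weight (fun α => !f α) = 2 ^ Fintype.card V := by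
  simp only [weight, Bool.not_eq_true', ← Bool.not_eq_true, Finset.card_filter_add_card_filter_not]
  simp

theorem weight_and_add_weight_not_and (f g : (V → Bool) → Bool) :
    weight (fun α => f α && g α) + weight (fun α => !f α && g α) = weight g := by
  rw [weight.eq_def g, ← Finset.card_filter_add_card_filter_not (fun α => f α = true)]
  simp only [weight, Finset.filter_filter, Bool.and_eq_true, Bool.not_eq_true', Bool.not_eq_true,
    and_comm]

theorem statIndep_iff (f g : (V → Bool) → Bool) :
    StatIndep f g ↔
      2 ^ Fintype.card V * weight (fun α => f α && g α) = weight g * weight f := by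
  rw [StatIndep, ← weight_add_weight_not f, ← weight_and_add_weight_not_and f g]
  constructor <;> intro h <;> linarith

theorem weight_and_eq_sum (f p : (V → Bool) → Bool) :
    weight (fun α => f α && p α) = ∑ α, (f α).toNat * (p α).toNat := by
  rw [weight, Finset.card_filter]
  refine Finset.sum_congr rfl fun α _ => ?_
  cases f α <;> cases p α <;> rfl

theorem two_pow_card_mul_toNat_fold_or {ι : Type*} [DecidableEq ι] (β : ι → Bool)
    (s : Finset ι) :
    2 ^ s.card * (s.fold or false β).toNat =
      2 * ∑ Ψ ∈ s.powerset, (Ψ.fold xor false β).toNat := by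
  induction s using Finset.induction_on with
  | empty => rfl
  | @insert a s ha ih =>
    have fold_xor_insert : ∀ Ψ ∈ s.powerset,
        ((insert a Ψ).fold xor false β).toNat = (xor (β a) (Ψ.fold xor false β)).toNat :=
      fun Ψ hΨ => by rw [Finset.fold_insert fun haΨ => ha (Finset.mem_powerset.mp hΨ haΨ)]
    rw [Finset.fold_insert ha, Finset.card_insert_of_notMem ha, Finset.sum_powerset_insert ha,
      Finset.sum_congr rfl fold_xor_insert, pow_succ]
    cases β a with
    | false =>
      simp only [Bool.false_or, Bool.false_xor]
      rw [mul_right_comm, ih]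
      ring
    | true =>
      have toNat_add_toNat_not (b : Bool) : b.toNat + (!b).toNat = 1 := by cases b <;> rfl
      simp only [Bool.true_or, Bool.true_xor, ← Finset.sum_add_distrib, toNat_add_toNat_not,
        Finset.sum_const, Finset.card_powerset, smul_eq_mul, Bool.toNat_true]
      ring

theorem two_pow_card_mul_weight_fold_or_and {ι : Type*} [Fintype ι] [DecidableEq ι]
    (φ : ι → (V → Bool) → Bool) (p : (V → Bool) → Bool) :
    2 ^ Fintype.card ι * weight (fun α => Finset.univ.fold or false (φ · α) && p α) =
      2 * ∑ Ψ : Finset ι, weight (fun α => Ψ.fold xor false (φ · α) && p α) := by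
  simp only [weight_and_eq_sum, Finset.mul_sum, ← mul_assoc]
  rw [Finset.sum_comm]
  refine Finset.sum_congr rfl fun α _ => ?_
  rw [← Finset.card_univ, two_pow_card_mul_toNat_fold_or, Finset.powerset_univ, Finset.mul_sum,
    Finset.sum_mul]

theorem stmt6 (n : ℕ) (φ : Fin n → (V → Bool) → Bool) (g : (V → Bool) → Bool)
    (h : ∀ Ψ : Finset (Fin n),
      StatIndep (fun α => Ψ.fold xor false (fun i => φ i α)) g) :
    StatIndep (fun α => Finset.univ.fold or false (fun i => φ i α)) g := by
  simp only [statIndep_iff] at h ⊢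
  have hor_and := two_pow_card_mul_weight_fold_or_and φ g
  have hor := two_pow_card_mul_weight_fold_or_and φ (fun _ => true)
  simp only [Fintype.card_fin, Bool.and_true] at hor_and hor
  refine Nat.eq_of_mul_eq_mul_left (pow_pos two_pos n) ?_
  calc 2 ^ n * (2 ^ Fintype.card V * weight (fun α => Finset.univ.fold or false (φ · α) && g α))
      = 2 * ∑ Ψ : Finset (Fin n),
          2 ^ Fintype.card V * weight (fun α => Ψ.fold xor false (φ · α) && g α) := by
        rw [mul_left_comm, hor_and, mul_left_comm, Finset.mul_sum]
    _ = weight g * (2 * ∑ Ψ : Finset (Fin n), weight (fun α => Ψ.fold xor false (φ · α))) := by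
        simp only [h, ← Finset.mul_sum]
        ring
    _ = 2 ^ n * (weight g * weight (fun α => Finset.univ.fold or false (φ · α))) := by
        rw [← hor, mul_left_comm]

end Danira
end

section
/- Let f be a Boolean function on assignments over a finite variable set V. Define Fact(f) = { x ∈ V : f[false/x] ⊕ f[true/x] = true (constant) }. Then f = (⊕_{x ∈ Fact(f)} x) ⊕ f[α], where α assigns false to all variables in Fact(f); that is, the maximal linear factorization is valid. -/
namespace Danira

variable {V : Type*} [Fintype V] [DecidableEq V]

lemma aux12 (f : (V → Bool) → Bool) (S : Finset V)
    (hS : ∀ x ∈ S, ∀ α, xor (subst f x false α) (subst f x true α) = true) :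
    ∀ α, f α = xor (S.fold xor false (fun x => α x))
      (f (fun v => if v ∈ S then false else α v)) := by
  induction S using Finset.induction with
  | empty => intro α; simp
  | @insert x S hx ih =>
      intro α
      have hxp := hS x (Finset.mem_insert_self x S)
      have hstep : f α = xor (α x) (f (Function.update α x false)) := by
        have h := hxp α
        cases hb : α x with
        | false =>
            have : Function.update α x false = α := by
              funext v; by_cases hv : v = x <;> simp [Function.update, hv, hb]
            simp [this]
        | true =>
            have hupd : Function.update α x true = α := by
              funext v; by_cases hv : v = x <;> simp [Function.update, hv, hb]
            simp only [subst, hupd] at h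
            cases h1 : f (Function.update α x false) <;>
              simp [h1] at h ⊢ <;> simp [h]
      have ih' := ih (fun y hy α => hS y (Finset.mem_insert_of_mem hy) α)
        (Function.update α x false)
      have hfoldeq : S.fold xor false (fun y => Function.update α x false y)
          = S.fold xor false (fun y => α y) := by
        apply Finset.fold_congr
        intro y hy
        have : y ≠ x := fun h => hx (h ▸ hy)
        simp [Function.update, this]
      have hfun : (fun v => if v ∈ S then false else Function.update α x false v)
          = (fun v => if v ∈ insert x S then false else α v) := by
        funext v
        by_cases hv : v = x
        · subst hv; simp [Function.update, hx]
        · simp [Function.update, hv, Finset.mem_insert]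
      rw [hstep, ih', hfoldeq, hfun, Finset.fold_insert hx, Bool.xor_assoc]

theorem stmt12 (f : (V → Bool) → Bool) :
    f = fun α => xor ((Fact f).fold xor false (fun x => α x))
      (f (fun v => if v ∈ Fact f then false else α v)) := by
  funext α
  exact aux12 f (Fact f)
    (fun x hx => by simpa [Fact] using (Finset.mem_filter.mp hx).2) α

end Danira
end

section
/- Let f = ⊕_{i=1}^{n} φ_i be an XOR of Boolean functions φ_i over a finite variable set V. Write each φ_i = L_i ⊕ N_i with L_i = ⊕_{x ∈ Fact(φ_i)} x its maximal linear part and N_i its nonlinear remainder. Then every variable in the symmetric difference △_{i=1}^n Fact(φ_i) that does not lie in any essential variable set of any N_i belongs to Fact(f); i.e., (△_i Fact(φ_i)) \ (∪_i Ess(N_i)) ⊆ Fact(f). -/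
namespace Danira

variable {V : Type*} [Fintype V] [DecidableEq V]

lemma key_fact (g : (V → Bool) → Bool) (x : V) (hx : x ∈ Fact g) (α : V → Bool) :
    g α = xor (α x) (g (Function.update α x false)) := by
  have h := (Finset.mem_filter.mp hx).2 α
  simp only [subst] at h
  have h2 : g (Function.update α x true) = ! g (Function.update α x false) := by
    cases hb : g (Function.update α x false) <;> cases hc : g (Function.update α x true) <;>
      simp_all
  have hself : Function.update α x (α x) = α := Function.update_eq_self x α
  cases hax : α x with
  | false =>
    have hupd : Function.update α x false = α := by rw [← hax]; exact hself
    rw [hupd]; simp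
  | true =>
    have hupd : Function.update α x true = α := by rw [← hax]; exact hself
    simp only [Bool.true_xor]; rw [← h2, hupd]

lemma decomp (g : (V → Bool) → Bool) (T : Finset V) : T ⊆ Fact g → ∀ α,
    g α = xor (T.fold xor false α) (g (fun v => if v ∈ T then false else α v)) := by
  induction T using Finset.induction with
  | empty => intro _ α; simp
  | @insert a T ha ih =>
    intro hins α
    have hT' : T ⊆ Fact g := fun y hy => hins (Finset.mem_insert_of_mem hy)
    have ha' : a ∈ Fact g := hins (Finset.mem_insert_self a T)
    rw [ih hT' α]
    have hk := key_fact g a ha' (fun v => if v ∈ T then false else α v)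
    have heq : Function.update (fun v => if v ∈ T then false else α v) a false
        = fun v => if v ∈ insert a T then false else α v := by
      funext v
      by_cases hv : v = a
      · subst hv; simp [Function.update]
      · simp [Function.update, hv, Finset.mem_insert]
    have haT : (if a ∈ T then false else α a) = α a := by simp [ha]
    rw [heq, haT] at hk
    rw [hk, Finset.fold_insert ha]
    cases T.fold xor false α <;> cases α a <;>
      cases g (fun v => if v ∈ insert a T then false else α v) <;> simp

lemma insensitive (g : (V → Bool) → Bool) (x : V) (hx : x ∉ Fact g)
    (hN : ¬ FunDep (fun α => g (fun v => if v ∈ Fact g then false else α v)) x)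
    (β γ : V → Bool) (hβγ : ∀ v, v ≠ x → β v = γ v) : g β = g γ := by
  rw [decomp g (Fact g) le_rfl β, decomp g (Fact g) le_rfl γ]
  have h1 : (Fact g).fold xor false β = (Fact g).fold xor false γ :=
    Finset.fold_congr (fun y hy => hβγ y (fun h => hx (h ▸ hy)))
  have h2 : g (fun v => if v ∈ Fact g then false else β v)
      = g (fun v => if v ∈ Fact g then false else γ v) := by
    by_contra hne
    exact hN ⟨β, γ, hβγ, hne⟩
  rw [h1, h2]

lemma mem_foldr_symmDiff (x : V) (l : List (Finset V)) :
    (x ∈ l.foldr symmDiff (∅ : Finset V)) ↔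
      (l.map fun s => decide (x ∈ s)).foldr xor false = true := by
  induction l with
  | nil => simp
  | cons a l ih =>
    simp only [List.foldr, List.map, Finset.mem_symmDiff]
    by_cases hxa : x ∈ a <;> simp [hxa, ih]

lemma fold_univ_eq (n : ℕ) (g : Fin n → Bool) :
    Finset.univ.fold xor false g = (List.ofFn g).foldr xor false := by
  simp [Finset.fold, List.ofFn_eq_map, Fin.univ_def]


theorem stmt13 (n : ℕ) (φ : Fin n → (V → Bool) → Bool)
    (f : (V → Bool) → Bool)
    (hf : f = fun α => Finset.univ.fold xor false (fun i => φ i α))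
    (NL : Fin n → (V → Bool) → Bool)
    (hNL : ∀ i, NL i = fun α => φ i (fun v => if v ∈ Fact (φ i) then false else α v)) :
    ((List.ofFn fun i => Fact (φ i)).foldr symmDiff ∅
        \ Finset.univ.biUnion (fun i : Fin n => Ess (NL i)))
      ⊆ Fact f := by
  intro x hx
  rw [Finset.mem_sdiff] at hx
  obtain ⟨hx1, hx2⟩ := hx
  simp only [Finset.mem_biUnion, Finset.mem_univ, true_and, not_exists] at hx2
  rw [Fact, Finset.mem_filter]
  refine ⟨Finset.mem_univ x, fun α => ?_⟩
  subst hf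
  simp only [subst]
  set β := Function.update α x false with hβ
  set γ := Function.update α x true with hγ
  have hstep : ∀ i ∈ (Finset.univ : Finset (Fin n)),
      xor (φ i β) (φ i γ) = decide (x ∈ Fact (φ i)) := by
    intro i _
    by_cases hi : x ∈ Fact (φ i)
    · have h := (Finset.mem_filter.mp hi).2 α
      simp only [subst] at h
      simp [hi, ← hβ, ← hγ] at h ⊢
      exact h
    · have hN : ¬ FunDep (NL i) x := by
        have h := hx2 i
        simp only [Ess, Finset.mem_filter, Finset.mem_univ, true_and] at h
        exact h
      rw [hNL i] at hN
      have hins := insensitive (φ i) x hi hN β γ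
        (by intro v hv; simp [hβ, hγ, Function.update, hv])
      simp [hi, hins]
  have hdist : xor (Finset.univ.fold xor false fun i => φ i β)
      (Finset.univ.fold xor false fun i => φ i γ)
      = Finset.univ.fold xor false (fun i : Fin n => xor (φ i β) (φ i γ)) :=
    (Finset.fold_op_distrib).symm
  rw [hdist, Finset.fold_congr hstep, fold_univ_eq]
  have hmap : (List.ofFn fun i : Fin n => decide (x ∈ Fact (φ i)))
      = (List.ofFn fun i : Fin n => Fact (φ i)).map (fun s => decide (x ∈ s)) := by
    rw [List.map_ofFn]; rfl
  rw [hmap]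
  exact (mem_foldr_symmDiff x _).mp hx1

end Danira
end

section
/- Let f = ⊕_{i=1}^{n} φ_i be an XOR of Boolean functions φ_i over a finite variable set V, with maximal factorizations φ_i = L_i ⊕ N_i as above. Then the essential variable set of f is contained in (△_{i=1}^n Fact(φ_i)) ∪ (∪_{i=1}^n Ess(N_i)). -/
namespace Danira

variable {V : Type*} [Fintype V] [DecidableEq V]

/-- embedding into ZMod 2 -/
def e (b : Bool) : ZMod 2 := if b then 1 else 0

lemma e_inj : Function.Injective e := by decide

lemma e_xor (a b : Bool) : e (xor a b) = e a + e b := by revert a b; decide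

lemma e_fold {ι : Type*} [DecidableEq ι] (s : Finset ι) (g : ι → Bool) :
    e (s.fold xor false g) = ∑ i ∈ s, e (g i) := by
  induction s using Finset.induction_on with
  | empty => simp [e]
  | @insert a s h ih => simp [Finset.fold_insert h, e_xor, ih, Finset.sum_insert h]

lemma decide_symmDiff (x : V) (s t : Finset V) :
    decide (x ∈ symmDiff s t) = xor (decide (x ∈ s)) (decide (x ∈ t)) := by
  by_cases hs : x ∈ s <;> by_cases ht : x ∈ t <;>
    simp [Finset.mem_symmDiff, hs, ht]

lemma e_symmDiff_list (x : V) (l : List (Finset V)) :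
    e (decide (x ∈ l.foldr symmDiff ∅)) = (l.map fun s => e (decide (x ∈ s))).sum := by
  induction l with
  | nil => simp [e]
  | cons s l ih =>
    simp only [List.foldr_cons, List.map_cons, List.sum_cons, ← ih]
    by_cases hs : x ∈ s <;> by_cases ht : x ∈ List.foldr symmDiff ∅ l <;>
      simp [Finset.mem_symmDiff, hs, ht, e] <;> decide

/-- flipping set-to-false for a factored variable -/
lemma fact_set_false {g : (V → Bool) → Bool} {x : V} (hx : x ∈ Fact g) (α : V → Bool) :
    g α = xor (α x) (g (Function.update α x false)) := by
  simp only [Fact, Finset.mem_filter, Finset.mem_univ, true_and] at hx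
  have h := hx α
  simp only [subst] at h
  cases hax : α x with
  | false =>
    have : Function.update α x false = α := by
      funext v; by_cases hv : v = x <;> simp [Function.update, hv, hax]
    rw [this]; simp
  | true =>
    have hα : Function.update α x true = α := by
      funext v; by_cases hv : v = x <;> simp [Function.update, hv, hax]
    rw [hα] at h
    cases h1 : g (Function.update α x false) <;> cases h2 : g α <;>
      simp [h1, h2] at h ⊢

lemma mask_insert (s : Finset V) (x : V) (α : V → Bool) :
    (fun v => if v ∈ insert x s then false else α v)
      = Function.update (fun v => if v ∈ s then false else α v) x false := by
  funext v; by_cases hv : v = x <;> simp [Function.update, hv]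

/-- factorization over any subset of Fact g -/
lemma factor_subset (g : (V → Bool) → Bool) (s : Finset V) (hs : s ⊆ Fact g) (α : V → Bool) :
    g α = xor (s.fold xor false α) (g (fun v => if v ∈ s then false else α v)) := by
  induction s using Finset.induction_on with
  | empty => simp
  | @insert x s hx ih =>
    have hxF : x ∈ Fact g := hs (Finset.mem_insert_self x s)
    have hsF : s ⊆ Fact g := fun v hv => hs (Finset.mem_insert_of_mem hv)
    rw [ih hsF, Finset.fold_insert hx, mask_insert,
      fact_set_false hxF (fun v => if v ∈ s then false else α v)]
    rw [if_neg hx]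
    cases α x <;> cases s.fold xor false α <;>
      cases g (Function.update (fun v => if v ∈ s then false else α v) x false) <;> rfl


omit [Fintype V] in
lemma not_fundep_update {g : (V → Bool) → Bool} {x : V}
    (h : ¬ FunDep g x) (α : V → Bool) (b : Bool) :
    g (Function.update α x b) = g α := by
  by_contra hne
  exact h ⟨Function.update α x b, α, fun v hv => Function.update_of_ne hv b α, hne⟩

omit [Fintype V] in
lemma fold_xor_update_mem {s : Finset V} {x : V} (hx : x ∈ s) (α : V → Bool) (b : Bool) :
    s.fold xor false (Function.update α x b) = xor (xor b (α x)) (s.fold xor false α) := by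
  have he : x ∉ s.erase x := Finset.notMem_erase x s
  rw [← Finset.insert_erase hx, Finset.fold_insert he, Finset.fold_insert he]
  have hc : (s.erase x).fold xor false (Function.update α x b)
      = (s.erase x).fold xor false α := by
    apply Finset.fold_congr
    intro v hv
    exact Function.update_of_ne (Finset.ne_of_mem_erase hv) b α
  rw [hc, Function.update_self]
  cases b <;> cases α x <;> cases (s.erase x).fold xor false α <;> rfl

omit [Fintype V] in
lemma fold_xor_update_notMem {s : Finset V} {x : V} (hx : x ∉ s) (α : V → Bool) (b : Bool) :
    s.fold xor false (Function.update α x b) = s.fold xor false α := by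
  apply Finset.fold_congr
  intro v hv
  have : v ≠ x := by rintro rfl; exact hx hv
  exact Function.update_of_ne this b α

theorem stmt14 (n : ℕ) (φ : Fin n → (V → Bool) → Bool)
    (f : (V → Bool) → Bool)
    (hf : f = fun α => Finset.univ.fold xor false (fun i => φ i α))
    (NL : Fin n → (V → Bool) → Bool)
    (hNL : ∀ i, NL i = fun α => φ i (fun v => if v ∈ Fact (φ i) then false else α v)) :
    Ess f ⊆ (List.ofFn fun i => Fact (φ i)).foldr symmDiff ∅
      ∪ Finset.univ.biUnion (fun i : Fin n => Ess (NL i)) := by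

  intro x hx
  by_contra hmem
  simp only [Finset.mem_union, not_or, Finset.mem_biUnion, Finset.mem_univ, true_and,
    not_exists] at hmem
  obtain ⟨h1, h2⟩ := hmem
  have hdep : FunDep f x := (Finset.mem_filter.mp hx).2
  have hNLdep : ∀ i : Fin n, ¬ FunDep (NL i) x := by
    intro i hd
    exact h2 i (Finset.mem_filter.mpr ⟨Finset.mem_univ x, hd⟩)
  -- factorization of each φ i
  have hfac : ∀ (i : Fin n) (δ : V → Bool),
      φ i δ = xor ((Fact (φ i)).fold xor false δ) (NL i δ) := by
    intro i δ
    rw [hNL i]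
    exact factor_subset (φ i) (Fact (φ i)) (le_refl _) δ
  -- flipping x does not change f
  have key : ∀ (γ : V → Bool) (b : Bool), f (Function.update γ x b) = f γ := by
    intro γ b
    apply e_inj
    rw [hf]
    simp only [e_fold]
    have hterm : ∀ i : Fin n,
        e (φ i (Function.update γ x b))
          = e (xor b (γ x)) * e (decide (x ∈ Fact (φ i))) + e (φ i γ) := by
      intro i
      rw [hfac i, hfac i γ, not_fundep_update (hNLdep i) γ b]
      by_cases hxi : x ∈ Fact (φ i)
      · rw [fold_xor_update_mem hxi, decide_eq_true hxi]
        cases b <;> cases hgx : γ x <;>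
          cases hfold : (Fact (φ i)).fold xor false γ <;>
          cases hnl : NL i γ <;> decide
      · rw [fold_xor_update_notMem hxi, decide_eq_false hxi]
        cases hfold : (Fact (φ i)).fold xor false γ <;>
          cases hnl : NL i γ <;> cases b <;> cases hgx : γ x <;> decide
    rw [Finset.sum_congr rfl (fun i _ => hterm i), Finset.sum_add_distrib,
      ← Finset.mul_sum]
    have hsum : (∑ i : Fin n, e (decide (x ∈ Fact (φ i)))) = 0 := by
      have := e_symmDiff_list x (List.ofFn fun i => Fact (φ i))
      rw [List.map_ofFn, List.sum_ofFn] at this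
      have h1' : decide (x ∈ (List.ofFn fun i => Fact (φ i)).foldr symmDiff ∅) = false := by
        simpa using h1
      rw [h1'] at this
      simpa [e, Function.comp] using this.symm
    rw [hsum, mul_zero, zero_add]
  -- conclude
  obtain ⟨α, β, hagree, hne⟩ := hdep
  apply hne
  have hβ : β = Function.update α x (β x) := by
    funext v
    by_cases hv : v = x
    · subst hv; simp
    · rw [Function.update_of_ne hv]
      exact (hagree v hv).symm
  rw [hβ, key]


end Danira
end
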